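/- Let 1 < q < p < r, A > 0, B > 0, C ≤ 0, and Φ(t) = (t^p/p)A - (t^q/q)C - (t^r/r)B for t > 0. Then Φ has a unique critical point t₃ > 0 in (0,∞), and Φ''(t₃) < 0 (so t₃ is a local maximum). -/

import Mathlib

/-!
For `t > 0` one has `Φ'(t) = t ^ (p - 1) * g t` with `g t = A - C t ^ (q - p) - B t ^ (r - p)`
(`g = derivFactor p q r A B C`). Since `C ≤ 0`, `B > 0` and `q < p < r`, `g` has negative
derivative on `(0, ∞)`; it is positive near `0` and negative for large `t`, so it has exactly one
zero `t₃`, which is the unique critical point of `Φ`. Because `g t₃ = 0`, the product rule gives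
`Φ''(t₃) = t₃ ^ (p - 1) * g'(t₃) < 0`.
-/

open Real Set Filter Topology

noncomputable def derivFactor (p q r A B C t : ℝ) : ℝ :=
  A - C * t ^ (q - p) - B * t ^ (r - p)

section
variable {p q r A B C t : ℝ}

lemma hasDerivAt_rpow_div_self (hp : p ≠ 0) (ht : 0 < t) :
    HasDerivAt (fun t => t ^ p / p) (t ^ (p - 1)) t := by
  simpa [mul_div_cancel_left₀ _ hp] using
    (hasDerivAt_rpow_const (p := p) (Or.inl ht.ne')).div_const p

lemma rpow_sub_one_mul_derivFactor (ht : 0 < t) :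
    t ^ (p - 1) * derivFactor p q r A B C t =
      t ^ (p - 1) * A - t ^ (q - 1) * C - t ^ (r - 1) * B := by
  have hq : t ^ (p - 1) * t ^ (q - p) = t ^ (q - 1) := by rw [← rpow_add ht]; ring_nf
  have hr : t ^ (p - 1) * t ^ (r - p) = t ^ (r - 1) := by rw [← rpow_add ht]; ring_nf
  rw [derivFactor, ← hq, ← hr]
  ring

lemma hasDerivAt_phi (hp : p ≠ 0) (hq : q ≠ 0) (hr : r ≠ 0) (ht : 0 < t) :
    HasDerivAt (fun t => t ^ p / p * A - t ^ q / q * C - t ^ r / r * B)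
      (t ^ (p - 1) * derivFactor p q r A B C t) t := by
  rw [rpow_sub_one_mul_derivFactor ht]
  exact (((hasDerivAt_rpow_div_self hp ht).mul_const A).sub
    ((hasDerivAt_rpow_div_self hq ht).mul_const C)).sub
    ((hasDerivAt_rpow_div_self hr ht).mul_const B)

lemma hasDerivAt_derivFactor (ht : 0 < t) :
    HasDerivAt (derivFactor p q r A B C)
      (-(C * ((q - p) * t ^ (q - p - 1))) - B * ((r - p) * t ^ (r - p - 1))) t := by
  have h := ((hasDerivAt_const t A).fun_sub
    ((hasDerivAt_rpow_const (p := q - p) (Or.inl ht.ne')).const_mul C)).fun_sub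
    ((hasDerivAt_rpow_const (p := r - p) (Or.inl ht.ne')).const_mul B)
  rwa [zero_sub] at h

lemma deriv_derivFactor_neg (hqp : q < p) (hpr : p < r) (hB : 0 < B) (hC : C ≤ 0)
    (ht : 0 < t) :
    deriv (derivFactor p q r A B C) t < 0 := by
  rw [(hasDerivAt_derivFactor ht).deriv]
  have hCterm : 0 ≤ C * ((q - p) * t ^ (q - p - 1)) :=
    mul_nonneg_of_nonpos_of_nonpos hC
      (mul_nonpos_of_nonpos_of_nonneg (by linarith) (rpow_pos_of_pos ht _).le)
  have hBterm : 0 < B * ((r - p) * t ^ (r - p - 1)) :=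
    mul_pos hB (mul_pos (by linarith) (rpow_pos_of_pos ht _))
  linarith

lemma strictAntiOn_derivFactor (hqp : q < p) (hpr : p < r) (hB : 0 < B) (hC : C ≤ 0) :
    StrictAntiOn (derivFactor p q r A B C) (Ioi 0) := by
  refine strictAntiOn_of_deriv_neg (convex_Ioi 0)
    (fun x hx => (hasDerivAt_derivFactor hx).continuousAt.continuousWithinAt) fun x hx => ?_
  rw [interior_Ioi] at hx
  exact deriv_derivFactor_neg hqp hpr hB hC hx

lemma exists_derivFactor_pos (hpr : p < r) (hA : 0 < A) (hC : C ≤ 0) :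
    ∃ t, 0 < t ∧ 0 < derivFactor p q r A B C t := by
  have hlim : Tendsto (fun t : ℝ => B * t ^ (r - p)) (𝓝[>] 0) (𝓝 0) := by
    have := ((continuousAt_rpow_const 0 (r - p) (Or.inr (by linarith))).const_mul B).tendsto
    rw [zero_rpow (by linarith), mul_zero] at this
    exact this.mono_left nhdsWithin_le_nhds
  obtain ⟨t, hsmall, ht⟩ := ((hlim.eventually (gt_mem_nhds hA)).and self_mem_nhdsWithin).exists
  refine ⟨t, ht, ?_⟩
  have : C * t ^ (q - p) ≤ 0 := mul_nonpos_of_nonpos_of_nonneg hC (rpow_pos_of_pos ht _).le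
  rw [derivFactor]
  linarith

lemma exists_derivFactor_neg (hqp : q ≤ p) (hpr : p < r) (hB : 0 < B) (hC : C ≤ 0) :
    ∃ t, 0 < t ∧ derivFactor p q r A B C t < 0 := by
  have hlim : Tendsto (fun t : ℝ => B * t ^ (r - p)) atTop atTop :=
    (tendsto_rpow_atTop (sub_pos.2 hpr)).const_mul_atTop hB
  obtain ⟨t, hlarge, ht⟩ :=
    ((hlim.eventually_gt_atTop (A - C)).and (eventually_ge_atTop 1)).exists
  refine ⟨t, by linarith, ?_⟩
  have : t ^ (q - p) ≤ 1 := rpow_le_one_of_one_le_of_nonpos ht (by linarith)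
  rw [derivFactor]
  nlinarith

lemma exists_derivFactor_eq_zero (hqp : q < p) (hpr : p < r) (hA : 0 < A) (hB : 0 < B)
    (hC : C ≤ 0) : ∃ t, 0 < t ∧ derivFactor p q r A B C t = 0 := by
  obtain ⟨a, ha, hga⟩ := exists_derivFactor_pos (q := q) (B := B) hpr hA hC
  obtain ⟨b, hb, hgb⟩ := exists_derivFactor_neg (A := A) hqp.le hpr hB hC
  exact isPreconnected_Ioi.intermediate_value hb ha
    (fun x hx => (hasDerivAt_derivFactor hx).continuousAt.continuousWithinAt) ⟨hgb.le, hga.le⟩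

lemma deriv_rpow_mul_derivFactor_neg (hqp : q < p) (hpr : p < r) (hB : 0 < B) (hC : C ≤ 0)
    (ht : 0 < t) (hzero : derivFactor p q r A B C t = 0) :
    deriv (fun t => t ^ (p - 1) * derivFactor p q r A B C t) t < 0 := by
  have hg := (hasDerivAt_derivFactor (p := p) (q := q) (r := r) (A := A) (B := B) (C := C)
    ht).differentiableAt.hasDerivAt
  rw [((hasDerivAt_rpow_const (p := p - 1) (Or.inl ht.ne')).fun_mul hg).deriv, hzero, mul_zero,
    zero_add]
  exact mul_neg_of_pos_of_neg (rpow_pos_of_pos ht _) (deriv_derivFactor_neg hqp hpr hB hC ht)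

end

theorem stmt_17 (p q r A B C : ℝ) (hq : 1 < q) (hqp : q < p) (hpr : p < r)
    (hA : 0 < A) (hB : 0 < B) (hC : C ≤ 0) :
    let Φ : ℝ → ℝ := fun t => t ^ p / p * A - t ^ q / q * C - t ^ r / r * B
    ∃ t₃ : ℝ, 0 < t₃ ∧ deriv Φ t₃ = 0 ∧
      (∀ t : ℝ, 0 < t → deriv Φ t = 0 → t = t₃) ∧
      deriv (deriv Φ) t₃ < 0 := by
  intro Φ
  have hΦ' : ∀ t, 0 < t → HasDerivAt Φ (t ^ (p - 1) * derivFactor p q r A B C t) t :=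
    fun t => hasDerivAt_phi (by linarith) (by linarith) (by linarith)
  obtain ⟨t₃, ht₃, hzero⟩ := exists_derivFactor_eq_zero hqp hpr hA hB hC
  refine ⟨t₃, ht₃, by rw [(hΦ' t₃ ht₃).deriv, hzero, mul_zero], fun t ht hcrit => ?_, ?_⟩
  · rw [(hΦ' t ht).deriv, mul_eq_zero] at hcrit
    exact (strictAntiOn_derivFactor hqp hpr hB hC).injOn ht ht₃
      ((hcrit.resolve_left (rpow_pos_of_pos ht _).ne').trans hzero.symm)
  · have hderiv : deriv Φ =ᶠ[𝓝 t₃] fun t => t ^ (p - 1) * derivFactor p q r A B C t :=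
      eventually_of_mem (Ioi_mem_nhds ht₃) fun t ht => (hΦ' t ht).deriv
    rw [hderiv.deriv_eq]
    exact deriv_rpow_mul_derivFactor_neg hqp hpr hB hC ht₃ hzero
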